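/- arXiv:1702.07290 — 2 statements merged into one kernel-verified Lean document; each statement's English description precedes it below -/
import Mathlib

section
/- Let J ∈ ℕ, J ≥ 1, T > 0, and γ ≥ 0. Let M : [0, T] → ℝ^{J×J} be continuously differentiable with M(t) symmetric positive definite for every t ∈ [0, T] and with its derivative satisfying |xᵀ M′(t) x| ≤ 2γ · xᵀ M(t) x for all x ∈ ℝ^J and t ∈ [0, T]. Let S : [0, T] → ℝ^{J×J} be continuous with S(t) symmetric positive semidefinite for every t. If U : [0, T] → ℝ^J is continuously differentiable and satisfies (d/dt)(M(t)U(t)) + S(t)U(t) = 0 on [0, T], then for every t ∈ [0, T]: U(t)ᵀ M(t) U(t) + 2 ∫₀ᵗ U(s)ᵀ S(s) U(s) ds ≤ e^{2γt} · U(0)ᵀ M(0) U(0). -/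
/-!
Along the solution, the energy `E = UᵀMU` obeys the transport identity
`E' = 2Uᵀ(MU)' - UᵀM'U = -2UᵀSU - UᵀM'U`: symmetry of `M` turns `U'ᵀMU` into
`Uᵀ(MU)' - UᵀM'U`. Hence `F = E + 2∫₀ᵗ UᵀSU` has `F' = -UᵀM'U ≤ 2γE ≤ 2γF`, the last step
because `S` is positive semidefinite and `γ ≥ 0`, and Gronwall's inequality gives
`F(t) ≤ e^{2γt} F(0) = e^{2γt} E(0)`.
-/

open scoped Matrix
open Set

section Calculus

variable {𝕜 m n : Type*} [NontriviallyNormedField 𝕜] [Fintype n] {t : 𝕜}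

theorem HasDerivAt.dotProduct {f g : 𝕜 → n → 𝕜} {f' g' : n → 𝕜}
    (hf : HasDerivAt f f' t) (hg : HasDerivAt g g' t) :
    HasDerivAt (fun s => f s ⬝ᵥ g s) (f' ⬝ᵥ g t + f t ⬝ᵥ g') t := by
  simp only [_root_.dotProduct, ← Finset.sum_add_distrib]
  exact HasDerivAt.fun_sum fun i _ => (hasDerivAt_pi.1 hf i).mul (hasDerivAt_pi.1 hg i)

theorem HasDerivAt.matrix_mulVec {A : 𝕜 → Matrix m n 𝕜} {A' : Matrix m n 𝕜}
    {u : 𝕜 → n → 𝕜} {u' : n → 𝕜}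
    (hA : ∀ i j, HasDerivAt (fun s => A s i j) (A' i j) t) (hu : HasDerivAt u u' t) :
    HasDerivAt (fun s => A s *ᵥ u s) (A' *ᵥ u t + A t *ᵥ u') t :=
  hasDerivAt_pi.2 fun i => by
    simpa only [Matrix.mulVec, Pi.add_apply] using
      (hasDerivAt_pi.2 (hA i)).dotProduct hu

theorem Matrix.IsSymm.dotProduct_mulVec_comm {R : Type*} [CommSemiring R] {A : Matrix n n R}
    (hA : A.IsSymm) (v w : n → R) :
    v ⬝ᵥ A *ᵥ w = w ⬝ᵥ A *ᵥ v := by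
  rw [Matrix.dotProduct_mulVec, ← Matrix.mulVec_transpose, hA.eq, dotProduct_comm]

theorem Matrix.IsSymm.hasDerivAt_dotProduct_mulVec_self {A : 𝕜 → Matrix n n 𝕜}
    {A' : Matrix n n 𝕜} {u : 𝕜 → n → 𝕜} {w : n → 𝕜} (hsymm : (A t).IsSymm)
    (hA : ∀ i j, HasDerivAt (fun s => A s i j) (A' i j) t) (hu : DifferentiableAt 𝕜 u t)
    (hw : HasDerivAt (fun s => A s *ᵥ u s) w t) :
    HasDerivAt (fun s => u s ⬝ᵥ A s *ᵥ u s) (2 * (u t ⬝ᵥ w) - u t ⬝ᵥ A' *ᵥ u t) t := by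
  have hw_eq : w = A' *ᵥ u t + A t *ᵥ deriv u t :=
    hw.unique (HasDerivAt.matrix_mulVec hA hu.hasDerivAt)
  convert hu.hasDerivAt.dotProduct hw using 1
  rw [hsymm.dotProduct_mulVec_comm, hw_eq, dotProduct_add]
  ring

end Calculus

theorem ContinuousOn.dotProduct_mulVec_self {X R n : Type*} [TopologicalSpace X]
    [TopologicalSpace R] [NonUnitalNonAssocSemiring R] [IsTopologicalSemiring R] [Fintype n]
    {s : Set X} {A : X → Matrix n n R} {u : X → n → R}
    (hA : ∀ i j, ContinuousOn (fun t => A t i j) s) (hu : ContinuousOn u s) :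
    ContinuousOn (fun t => u t ⬝ᵥ A t *ᵥ u t) s := by
  simp only [continuousOn_iff_continuous_domRestrict] at hA hu ⊢
  have hA' : Continuous (s.domRestrict A) :=
    continuous_pi fun i => continuous_pi fun j => hA i j
  exact hu.dotProduct (hA'.matrix_mulVec hu)

section Primitive

variable {E : Type*} [NormedAddCommGroup E] [NormedSpace ℝ E]

theorem ContinuousOn.continuousOn_intervalIntegral {f : ℝ → E} {a b : ℝ}
    (hf : ContinuousOn f (Icc a b)) : ContinuousOn (fun y => ∫ s in a..y, f s) (Icc a b) := by
  rcases le_or_gt a b with hab | hba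
  · rw [← uIcc_of_le hab] at hf ⊢
    exact intervalIntegral.continuousOn_primitive_interval (hf.integrableOn_compact isCompact_uIcc)
  · simp [Icc_eq_empty_of_lt hba]

variable [CompleteSpace E]

theorem ContinuousOn.hasDerivAt_intervalIntegral {f : ℝ → E} {a b x : ℝ}
    (hf : ContinuousOn f (Icc a b)) (hx : x ∈ Ioo a b) :
    HasDerivAt (fun y => ∫ s in a..y, f s) (f x) x :=
  intervalIntegral.integral_hasDerivAt_right
    ((hf.mono (Icc_subset_Icc le_rfl hx.2.le)).intervalIntegrable_of_Icc hx.1.le)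
    ((hf.mono Ioo_subset_Icc_self).stronglyMeasurableAtFilter isOpen_Ioo x hx)
    (hf.continuousAt (Icc_mem_nhds hx.1 hx.2))

end Primitive

theorem le_exp_mul_of_hasDerivAt_le {f f' : ℝ → ℝ} {a b K : ℝ} (hf : ContinuousOn f (Icc a b))
    (hderiv : ∀ x ∈ Ioo a b, HasDerivAt f (f' x) x)
    (hbound : ∀ x ∈ Ioo a b, f' x ≤ K * f x) :
    ∀ x ∈ Icc a b, f x ≤ Real.exp (K * (x - a)) * f a := by
  set g : ℝ → ℝ := fun x => Real.exp (-(K * (x - a))) * f x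
  have hg_deriv : ∀ x ∈ Ioo a b,
      HasDerivAt g (Real.exp (-(K * (x - a))) * (f' x - K * f x)) x := fun x hx => by
    have hexp : HasDerivAt (fun y => Real.exp (-(K * (y - a))))
        (Real.exp (-(K * (x - a))) * -K) x := by
      simpa using (((hasDerivAt_id x).sub_const a).const_mul K).fun_neg.exp
    exact (hexp.mul (hderiv x hx)).congr_deriv (by ring)
  have hg_anti : AntitoneOn g (Icc a b) := by
    refine antitoneOn_of_deriv_nonpos (convex_Icc a b) ?_ ?_ ?_
    · exact (Real.continuous_exp.comp_continuousOn (by fun_prop)).mul hf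
    · rw [interior_Icc]
      exact fun x hx => (hg_deriv x hx).differentiableAt.differentiableWithinAt
    · rw [interior_Icc]
      intro x hx
      rw [(hg_deriv x hx).deriv]
      exact mul_nonpos_of_nonneg_of_nonpos (Real.exp_pos _).le (sub_nonpos.2 (hbound x hx))
  intro x hx
  have hgx : g x ≤ f a := by
    simpa [g] using hg_anti (left_mem_Icc.2 (hx.1.trans hx.2)) hx hx.1
  calc f x = Real.exp (K * (x - a)) * g x := by
        rw [← mul_assoc, ← Real.exp_add, add_neg_cancel, Real.exp_zero, one_mul]
    _ ≤ Real.exp (K * (x - a)) * f a := mul_le_mul_of_nonneg_left hgx (Real.exp_pos _).le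

theorem linear_system_energy_estimate_general
    (J : ℕ) (T : ℝ) (γ : ℝ) (hγ : 0 ≤ γ)
    (M M' S : ℝ → Matrix (Fin J) (Fin J) ℝ)
    (hMderiv : ∀ t ∈ Set.Icc (0 : ℝ) T, ∀ i j,
      HasDerivWithinAt (fun s => M s i j) (M' t i j) (Set.Icc 0 T) t)
    (hMpd : ∀ t ∈ Set.Icc (0 : ℝ) T, (M t).PosDef)
    (hM'bound : ∀ t ∈ Set.Icc (0 : ℝ) T, ∀ x : Fin J → ℝ,
      abs (x ⬝ᵥ (M' t).mulVec x) ≤ 2 * γ * (x ⬝ᵥ (M t).mulVec x))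
    (hScont : ∀ i j, ContinuousOn (fun t => S t i j) (Set.Icc 0 T))
    (hSpsd : ∀ t ∈ Set.Icc (0 : ℝ) T, (S t).PosSemidef)
    (U : ℝ → Fin J → ℝ)
    (hU : ContDiffOn ℝ 1 U (Set.Icc 0 T))
    (hODE : ∀ t ∈ Set.Icc (0 : ℝ) T,
      HasDerivWithinAt (fun s => (M s).mulVec (U s))
        (-(S t).mulVec (U t)) (Set.Icc 0 T) t) :
    ∀ t ∈ Set.Icc (0 : ℝ) T,
      U t ⬝ᵥ (M t).mulVec (U t) + 2 * ∫ s in (0 : ℝ)..t, U s ⬝ᵥ (S s).mulVec (U s)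
        ≤ Real.exp (2 * γ * t) * (U 0 ⬝ᵥ (M 0).mulVec (U 0)) := by
  intro t ht
  set E : ℝ → ℝ := fun s => U s ⬝ᵥ M s *ᵥ U s
  set Q : ℝ → ℝ := fun s => U s ⬝ᵥ S s *ᵥ U s
  set F : ℝ → ℝ := fun s => E s + 2 * ∫ r in (0 : ℝ)..s, Q r
  have hUcont : ContinuousOn U (Icc 0 T) := hU.continuousOn
  have hQcont : ContinuousOn Q (Icc 0 T) := .dotProduct_mulVec_self hScont hUcont
  have hFcont : ContinuousOn F (Icc 0 T) :=
    (ContinuousOn.dotProduct_mulVec_self (fun i j s hs => (hMderiv s hs i j).continuousWithinAt)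
      hUcont).add (continuousOn_const.mul hQcont.continuousOn_intervalIntegral)
  have hE_deriv : ∀ s ∈ Ioo 0 T, HasDerivAt E (-(2 * Q s) - U s ⬝ᵥ M' s *ᵥ U s) s := by
    intro s hs
    have hnhds : Icc 0 T ∈ nhds s := Icc_mem_nhds hs.1 hs.2
    have hsI : s ∈ Icc 0 T := Ioo_subset_Icc_self hs
    have hM_symm : (M s).IsSymm := Matrix.isHermitian_iff_isSymm.1 (hMpd s hsI).1
    simpa [Q, mul_neg] using hM_symm.hasDerivAt_dotProduct_mulVec_self
      (fun i j => (hMderiv s hsI i j).hasDerivAt hnhds)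
      ((hU.differentiableOn one_ne_zero s hsI).differentiableAt hnhds)
      ((hODE s hsI).hasDerivAt hnhds)
  have hF_deriv : ∀ s ∈ Ioo 0 T, HasDerivAt F (-(U s ⬝ᵥ M' s *ᵥ U s)) s := fun s hs =>
    ((hE_deriv s hs).add ((hQcont.hasDerivAt_intervalIntegral hs).const_mul 2)).congr_deriv
      (by ring)
  have hF_bound : ∀ s ∈ Ioo 0 T, -(U s ⬝ᵥ M' s *ᵥ U s) ≤ 2 * γ * F s := by
    intro s hs
    have hQ_integral_nonneg : 0 ≤ ∫ r in (0 : ℝ)..s, Q r :=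
      intervalIntegral.integral_nonneg hs.1.le fun r hr => by
        simpa using (hSpsd r ⟨hr.1, hr.2.trans hs.2.le⟩).dotProduct_mulVec_nonneg (U r)
    calc -(U s ⬝ᵥ M' s *ᵥ U s) ≤ |U s ⬝ᵥ M' s *ᵥ U s| := neg_le_abs _
      _ ≤ 2 * γ * E s := hM'bound s (Ioo_subset_Icc_self hs) (U s)
      _ ≤ 2 * γ * F s := by gcongr; linarith
  simpa [F] using le_exp_mul_of_hasDerivAt_le hFcont hF_deriv hF_bound t ht

/-- Pathwise energy (stability) estimate for the linear system of the evolving surface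
finite element discretization: if `M : [0,T] → ℝ^{J×J}` is `C¹`, symmetric positive
definite, with `|xᵀM′(t)x| ≤ 2γ xᵀM(t)x`, `S` continuous symmetric positive semidefinite,
and `U` is a `C¹` solution of `(d/dt)(M(t)U(t)) + S(t)U(t) = 0`, then
`U(t)ᵀM(t)U(t) + 2∫₀ᵗ U(s)ᵀS(s)U(s) ds ≤ e^{2γt} U(0)ᵀM(0)U(0)` for all `t ∈ [0,T]`. -/
theorem linear_system_energy_estimate
    (J : ℕ) (hJ : 1 ≤ J) (T : ℝ) (hT : 0 < T) (γ : ℝ) (hγ : 0 ≤ γ)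
    (M M' S : ℝ → Matrix (Fin J) (Fin J) ℝ)
    (hMderiv : ∀ t ∈ Set.Icc (0 : ℝ) T, ∀ i j,
      HasDerivWithinAt (fun s => M s i j) (M' t i j) (Set.Icc 0 T) t)
    (hM'cont : ∀ i j, ContinuousOn (fun t => M' t i j) (Set.Icc 0 T))
    (hMpd : ∀ t ∈ Set.Icc (0 : ℝ) T, (M t).PosDef)
    (hM'bound : ∀ t ∈ Set.Icc (0 : ℝ) T, ∀ x : Fin J → ℝ,
      abs (x ⬝ᵥ (M' t).mulVec x) ≤ 2 * γ * (x ⬝ᵥ (M t).mulVec x))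
    (hScont : ∀ i j, ContinuousOn (fun t => S t i j) (Set.Icc 0 T))
    (hSpsd : ∀ t ∈ Set.Icc (0 : ℝ) T, (S t).PosSemidef)
    (U : ℝ → Fin J → ℝ)
    (hU : ContDiffOn ℝ 1 U (Set.Icc 0 T))
    (hODE : ∀ t ∈ Set.Icc (0 : ℝ) T,
      HasDerivWithinAt (fun s => (M s).mulVec (U s))
        (-(S t).mulVec (U t)) (Set.Icc 0 T) t) :
    ∀ t ∈ Set.Icc (0 : ℝ) T,
      U t ⬝ᵥ (M t).mulVec (U t) + 2 * ∫ s in (0 : ℝ)..t, U s ⬝ᵥ (S s).mulVec (U s)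
        ≤ Real.exp (2 * γ * t) * (U 0 ⬝ᵥ (M 0).mulVec (U 0)) :=
  linear_system_energy_estimate_general J T γ hγ M M' S hMderiv hMpd hM'bound hScont hSpsd U hU hODE
end

section
/- Let V be a real Hilbert space, S ⊆ V a closed linear subspace, and let a, a′ : V × V → ℝ be bilinear forms such that there exist constants 0 < c_a ≤ C_b with |a(u, w)| ≤ C_b ‖u‖ ‖w‖ and |a′(u, w)| ≤ C_b ‖u‖ ‖w‖ for all u, w ∈ V, a(w, w) ≥ c_a ‖w‖² and a′(w, w) ≥ c_a ‖w‖² for all w ∈ S. Set δ := sup { |a′(u, w) − a(u, w)| : u, w ∈ V, ‖u‖ ≤ 1, ‖w‖ ≤ 1 }. Let v ∈ V and suppose Rv ∈ S and R′v ∈ S satisfy the Galerkin conditions a(Rv, φ) = a(v, φ) and a′(R′v, φ) = a′(v, φ) for all φ ∈ S. Then ‖R′v − Rv‖ ≤ (δ / c_a) · (1 + C_b / c_a) · ‖v‖. In particular, the Ritz projection depends Lipschitz-continuously (in operator norm) on the bilinear form. -/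
/-- Lipschitz dependence of the Ritz (Galerkin) projection on the bilinear form: if `a`
and `a′` are bilinear forms on a real Hilbert space `V`, both bounded with constant `C_b`
and coercive on a closed subspace `S` with constant `c_a`, `Rv, R′v ∈ S` are the
respective Ritz projections of `v`, and
`δ = sup { |a′(u,w) − a(u,w)| : ‖u‖ ≤ 1, ‖w‖ ≤ 1 }`, then
`‖R′v − Rv‖ ≤ (δ / c_a)(1 + C_b / c_a)‖v‖`. -/
theorem ritz_projection_lipschitz_in_form
    {V : Type*} [NormedAddCommGroup V] [InnerProductSpace ℝ V] [CompleteSpace V]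
    (S : Submodule ℝ V) (hSclosed : IsClosed (S : Set V))
    (a a' : V →ₗ[ℝ] V →ₗ[ℝ] ℝ) (ca Cb : ℝ) (hca : 0 < ca) (hcaCb : ca ≤ Cb)
    (hbound : ∀ u w : V, |a u w| ≤ Cb * ‖u‖ * ‖w‖)
    (hbound' : ∀ u w : V, |a' u w| ≤ Cb * ‖u‖ * ‖w‖)
    (hcoer : ∀ w ∈ S, ca * ‖w‖ ^ 2 ≤ a w w)
    (hcoer' : ∀ w ∈ S, ca * ‖w‖ ^ 2 ≤ a' w w)
    (v Rv R'v : V) (hRv : Rv ∈ S) (hR'v : R'v ∈ S)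
    (hGalerkin : ∀ φ ∈ S, a Rv φ = a v φ)
    (hGalerkin' : ∀ φ ∈ S, a' R'v φ = a' v φ) :
    ‖R'v - Rv‖ ≤
      (sSup {r : ℝ | ∃ u w : V, ‖u‖ ≤ 1 ∧ ‖w‖ ≤ 1 ∧ r = |a' u w - a u w|} / ca) *
        (1 + Cb / ca) * ‖v‖ := by
  have hCb : 0 < Cb := lt_of_lt_of_le hca hcaCb
  set T : Set ℝ := {r : ℝ | ∃ u w : V, ‖u‖ ≤ 1 ∧ ‖w‖ ≤ 1 ∧ r = |a' u w - a u w|} with hT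
  set δ : ℝ := sSup T with hδ
  have hTne : T.Nonempty := ⟨|a' 0 0 - a 0 0|, 0, 0, by simp, by simp, rfl⟩
  have hTbdd : BddAbove T := by
    refine ⟨2 * Cb, ?_⟩
    rintro r ⟨u, w, hu, hw, rfl⟩
    have h1 := hbound u w
    have h2 := hbound' u w
    have hub : Cb * ‖u‖ * ‖w‖ ≤ Cb := by
      calc Cb * ‖u‖ * ‖w‖ ≤ Cb * 1 * 1 := by
            apply mul_le_mul (mul_le_mul le_rfl hu (norm_nonneg _) hCb.le) hw
              (norm_nonneg _) (by positivity)
          _ = Cb := by ring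
    calc |a' u w - a u w| ≤ |a' u w| + |a u w| := abs_sub _ _
      _ ≤ Cb + Cb := add_le_add (h2.trans hub) (h1.trans hub)
      _ = 2 * Cb := by ring
  have hδ0 : 0 ≤ δ := by
    have : (0:ℝ) ∈ T := ⟨0, 0, by simp, by simp, by simp⟩
    exact le_csSup hTbdd this
  -- key bound: |(a'-a)(u,w)| ≤ δ ‖u‖ ‖w‖
  have hkey : ∀ u w : V, |a' u w - a u w| ≤ δ * ‖u‖ * ‖w‖ := by
    intro u w
    by_cases hu : u = 0
    · simp [hu]
    by_cases hw : w = 0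
    · simp [hw]
    have hun : 0 < ‖u‖ := norm_pos_iff.mpr hu
    have hwn : 0 < ‖w‖ := norm_pos_iff.mpr hw
    have hmem : |a' ((‖u‖)⁻¹ • u) ((‖w‖)⁻¹ • w) - a ((‖u‖)⁻¹ • u) ((‖w‖)⁻¹ • w)| ∈ T := by
      refine ⟨(‖u‖)⁻¹ • u, (‖w‖)⁻¹ • w, ?_, ?_, rfl⟩
      · simp [norm_smul, abs_of_nonneg (inv_nonneg.mpr hun.le), inv_mul_cancel₀ hun.ne']
      · simp [norm_smul, abs_of_nonneg (inv_nonneg.mpr hwn.le), inv_mul_cancel₀ hwn.ne']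
    have hle := le_csSup hTbdd hmem
    have heq : |a' ((‖u‖)⁻¹ • u) ((‖w‖)⁻¹ • w) - a ((‖u‖)⁻¹ • u) ((‖w‖)⁻¹ • w)|
        = (‖u‖)⁻¹ * (‖w‖)⁻¹ * |a' u w - a u w| := by
      simp only [map_smul, LinearMap.smul_apply, smul_eq_mul]
      rw [← mul_sub, ← mul_sub, abs_mul, abs_mul,
        abs_of_nonneg (inv_nonneg.mpr hun.le), abs_of_nonneg (inv_nonneg.mpr hwn.le)]
      ring
    rw [heq] at hle
    have := mul_le_mul_of_nonneg_left hle (by positivity : (0:ℝ) ≤ ‖u‖ * ‖w‖)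
    calc |a' u w - a u w|
        = ‖u‖ * ‖w‖ * ((‖u‖)⁻¹ * (‖w‖)⁻¹ * |a' u w - a u w|) := by
          field_simp
      _ ≤ ‖u‖ * ‖w‖ * δ := this
      _ = δ * ‖u‖ * ‖w‖ := by ring
  set e := R'v - Rv with he
  have heS : e ∈ S := S.sub_mem hR'v hRv
  -- identity: a' e e = (a'-a)(v - Rv, e)
  have hid : a' e e = a' (v - Rv) e - a (v - Rv) e := by
    have h1 : a' R'v e = a' v e := hGalerkin' e heS
    have h2 : a Rv e = a v e := hGalerkin e heS
    simp only [he, map_sub, LinearMap.sub_apply] at *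
    linarith
  have hcoe := hcoer' e heS
  have hbnd : a' e e ≤ δ * ‖v - Rv‖ * ‖e‖ := by
    rw [hid]
    exact (le_abs_self _).trans (hkey (v - Rv) e)
  -- ‖Rv‖ ≤ (Cb/ca) ‖v‖
  have hRvbd : ‖Rv‖ ≤ Cb / ca * ‖v‖ := by
    have h1 := hcoer Rv hRv
    have h2 : a Rv Rv = a v Rv := hGalerkin Rv hRv
    have h3 : a v Rv ≤ Cb * ‖v‖ * ‖Rv‖ := (le_abs_self _).trans (hbound v Rv)
    by_cases hz : Rv = 0
    · simp only [hz, norm_zero]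
      exact mul_nonneg (div_nonneg hCb.le hca.le) (norm_nonneg _)
    have hn : 0 < ‖Rv‖ := norm_pos_iff.mpr hz
    have h5 : ca * ‖Rv‖ ^ 2 ≤ Cb * ‖v‖ * ‖Rv‖ := by rw [h2] at h1; linarith
    rw [sq] at h5
    have h6 : ca * ‖Rv‖ ≤ Cb * ‖v‖ :=
      le_of_mul_le_mul_right (by nlinarith : ca * ‖Rv‖ * ‖Rv‖ ≤ Cb * ‖v‖ * ‖Rv‖) hn
    rw [div_mul_eq_mul_div, le_div_iff₀ hca]
    nlinarith
  have hvRv : ‖v - Rv‖ ≤ (1 + Cb / ca) * ‖v‖ := by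
    calc ‖v - Rv‖ ≤ ‖v‖ + ‖Rv‖ := norm_sub_le _ _
      _ ≤ ‖v‖ + Cb / ca * ‖v‖ := by linarith
      _ = (1 + Cb / ca) * ‖v‖ := by ring
  -- conclude
  have hmain : ca * ‖e‖ ^ 2 ≤ δ * ‖v - Rv‖ * ‖e‖ := hcoe.trans hbnd
  by_cases hez : e = 0
  · have : ‖e‖ = 0 := by rw [he] at hez ⊢; rw [hez, norm_zero]
    rw [this] at *
    exact mul_nonneg (mul_nonneg (div_nonneg hδ0 hca.le)
      (add_nonneg zero_le_one (div_nonneg hCb.le hca.le))) (norm_nonneg v)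
  have hen : 0 < ‖e‖ := norm_pos_iff.mpr hez
  have h4 : ‖e‖ ≤ δ / ca * ‖v - Rv‖ := by
    rw [sq] at hmain
    have h5 : ca * ‖e‖ ≤ δ * ‖v - Rv‖ := by
      have := le_of_mul_le_mul_right (by nlinarith : ca * ‖e‖ * ‖e‖ ≤ δ * ‖v - Rv‖ * ‖e‖) hen
      linarith
    rw [div_mul_eq_mul_div, le_div_iff₀ hca]
    nlinarith
  calc ‖R'v - Rv‖ = ‖e‖ := by rw [he]
    _ ≤ δ / ca * ‖v - Rv‖ := h4
    _ ≤ δ / ca * ((1 + Cb / ca) * ‖v‖) := by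
        apply mul_le_mul_of_nonneg_left hvRv (by positivity)
    _ = δ / ca * (1 + Cb / ca) * ‖v‖ := by ring
end
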